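/- arXiv:1803.10022 — 3 statements merged into one kernel-verified Lean document; each statement's English description precedes it below -/
import Mathlib

section
/- Let (X, M) be a measurable space, let N ⊆ M be a family of measurable sets, and let μ be a σ-finite measure defined on M. Then μ can be written uniquely as μ = μ_N + μ_N^⊥, where μ_N and μ_N^⊥ are measures on M such that μ_N is carried by N (there exist countably many sets N_i ∈ N with μ_N(X \ ⋃_i N_i) = 0) and μ_N^⊥ is singular to N (μ_N^⊥(N) = 0 for every N ∈ N). Moreover, there exists a set A ∈ M, which is a countable union of members of N, such that μ_N = μ restricted to A and μ_N^⊥ = μ restricted to X \ A. -/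
/-!
Pass to a finite measure `ν` with `μ ≪ ν` and choose countably many members
of `N` whose union `A` has maximal `ν`-measure among all such countable unions. By maximality
every member of `N` is `μ`-a.e. contained in `A`, so `μ.restrict Aᶜ` is singular to `N`. If
`μ = ν₁ + ν₂` is any such decomposition, then `ν₂ A = 0` since `A` is a countable union of
members of `N`, while `ν₁` lives on a countable union of members of `N`, each a.e. inside `A`,
so `ν₁ Aᶜ = 0`; this pins down `ν₁ = μ.restrict A` and `ν₂ = μ.restrict Aᶜ`.
-/

open MeasureTheory Set

/-- A measure `μ` is *carried by* a family `N` of sets if there exist countably many sets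
in `N` such that the complement of their union is `μ`-null. -/
def CarriedBy {X : Type*} [MeasurableSpace X] (μ : Measure X) (N : Set (Set X)) : Prop :=
  ∃ S : Set (Set X), S.Countable ∧ S ⊆ N ∧ μ (univ \ ⋃₀ S) = 0

/-- A measure `μ` is *singular to* a family `N` of sets if `μ` vanishes on every member of `N`. -/
def SingularTo {X : Type*} [MeasurableSpace X] (μ : Measure X) (N : Set (Set X)) : Prop :=
  ∀ s ∈ N, μ s = 0

section

variable {X : Type*} [MeasurableSpace X] {N : Set (Set X)}

theorem exists_countable_subset_measure_sdiff_sUnion_eq_zero_of_isFiniteMeasure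
    (hN : ∀ s ∈ N, MeasurableSet s) (ν : Measure X) [IsFiniteMeasure ν] :
    ∃ S ⊆ N, S.Countable ∧ ∀ t ∈ N, ν (t \ ⋃₀ S) = 0 := by
  set V : Set ENNReal := (fun S ↦ ν (⋃₀ S)) '' {S | S.Countable ∧ S ⊆ N}
  have hV : V.Nonempty := ⟨_, ∅, ⟨countable_empty, empty_subset N⟩, rfl⟩
  obtain ⟨u, -, hu, hu_mem⟩ := exists_seq_tendsto_sSup hV (OrderTop.bddAbove V)
  choose T hT hTu using hu_mem
  set S := ⋃ n, T n
  have hS_countable : S.Countable := countable_iUnion fun n ↦ (hT n).1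
  have hSN : S ⊆ N := iUnion_subset fun n ↦ (hT n).2
  have hS_max : ∀ S' ⊆ N, S'.Countable → ν (⋃₀ S') ≤ ν (⋃₀ S) := by
    intro S' hS'N hS'
    calc ν (⋃₀ S') ≤ sSup V := le_sSup ⟨S', ⟨hS', hS'N⟩, rfl⟩
      _ ≤ ν (⋃₀ S) := le_of_tendsto' hu fun n ↦
          hTu n ▸ measure_mono (sUnion_mono (subset_iUnion T n))
  refine ⟨S, hSN, hS_countable, fun t ht ↦ ?_⟩
  have hA : MeasurableSet (⋃₀ S) := .sUnion hS_countable fun s hs ↦ hN s (hSN hs)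
  have h_union : ν (t ∪ ⋃₀ S) ≤ ν (⋃₀ S) := by
    simpa only [sUnion_insert] using
      hS_max (insert t S) (insert_subset ht hSN) (hS_countable.insert t)
  rw [measure_sdiff' t hA.nullMeasurableSet (measure_ne_top ν _)]
  exact tsub_eq_zero_of_le h_union

theorem exists_countable_subset_measure_sdiff_sUnion_eq_zero
    (hN : ∀ s ∈ N, MeasurableSet s) (μ : Measure X) [SFinite μ] :
    ∃ S ⊆ N, S.Countable ∧ ∀ t ∈ N, μ (t \ ⋃₀ S) = 0 := by
  obtain ⟨ν, _, hμν, -⟩ := exists_isFiniteMeasure_absolutelyContinuous μ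
  obtain ⟨S, hSN, hS, hmax⟩ :=
    exists_countable_subset_measure_sdiff_sUnion_eq_zero_of_isFiniteMeasure hN ν
  exact ⟨S, hSN, hS, fun t ht ↦ hμν (hmax t ht)⟩

theorem SingularTo.measure_sUnion_eq_zero {μ : Measure X} (hμ : SingularTo μ N)
    {S : Set (Set X)} (hS : S.Countable) (hSN : S ⊆ N) : μ (⋃₀ S) = 0 :=
  (measure_sUnion_null_iff hS).2 fun t ht ↦ hμ t (hSN ht)

theorem CarriedBy.measure_compl_eq_zero {μ : Measure X} (hμ : CarriedBy μ N) {A : Set X}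
    (hA : ∀ t ∈ N, μ (t \ A) = 0) : μ Aᶜ = 0 := by
  obtain ⟨S, hS, hSN, h_null⟩ := hμ
  have h_cover : Aᶜ ⊆ (univ \ ⋃₀ S) ∪ ⋃ t ∈ S, t \ A := by
    intro x hxA
    by_cases hx : x ∈ ⋃₀ S
    · obtain ⟨t, ht, hxt⟩ := hx
      exact Or.inr (mem_biUnion ht ⟨hxt, hxA⟩)
    · exact Or.inl ⟨mem_univ x, hx⟩
  refine measure_mono_null h_cover (measure_union_null h_null ?_)
  exact (measure_biUnion_null_iff hS).2 fun t ht ↦ hA t (hSN ht)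

theorem Measure.restrict_add_eq_of_measure_compl_eq_zero {ν₁ ν₂ : Measure X} {A : Set X}
    (h₁ : ν₁ Aᶜ = 0) (h₂ : ν₂ A = 0) :
    (ν₁ + ν₂).restrict A = ν₁ ∧ (ν₁ + ν₂).restrict Aᶜ = ν₂ := by
  rw [Measure.restrict_add, Measure.restrict_add, Measure.restrict_eq_zero.2 h₂,
    Measure.restrict_eq_zero.2 h₁, add_zero, zero_add]
  exact ⟨Measure.restrict_eq_self_of_ae_mem h₁,
    Measure.restrict_eq_self_of_ae_mem (show Aᶜ ∈ ae ν₂ by rwa [mem_ae_iff, compl_compl])⟩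

end

/-- **Decomposition of σ-finite measures.** Every σ-finite measure decomposes uniquely as the
sum of a measure carried by `N` and a measure singular to `N`; moreover the two pieces are the
restrictions of `μ` to a measurable set `A` (a countable union of members of `N`) and to its
complement, respectively. -/
theorem statement0 {X : Type*} [MeasurableSpace X] (N : Set (Set X))
    (hN : ∀ s ∈ N, MeasurableSet s) (μ : Measure X) [SigmaFinite μ] :
    ∃ A : Set X, MeasurableSet A ∧
      (∃ S : Set (Set X), S.Countable ∧ S ⊆ N ∧ A = ⋃₀ S) ∧
      μ = μ.restrict A + μ.restrict (univ \ A) ∧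
      CarriedBy (μ.restrict A) N ∧ SingularTo (μ.restrict (univ \ A)) N ∧
      ∀ ν₁ ν₂ : Measure X, μ = ν₁ + ν₂ → CarriedBy ν₁ N → SingularTo ν₂ N →
        ν₁ = μ.restrict A ∧ ν₂ = μ.restrict (univ \ A) := by
  obtain ⟨S, hSN, hS, hmax⟩ := exists_countable_subset_measure_sdiff_sUnion_eq_zero hN μ
  have hA : MeasurableSet (⋃₀ S) := .sUnion hS fun s hs ↦ hN s (hSN hs)
  simp only [← compl_eq_univ_sdiff]
  refine ⟨⋃₀ S, hA, ⟨S, hS, hSN, rfl⟩, (Measure.restrict_add_restrict_compl hA).symm,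
    ⟨S, hS, hSN, ?_⟩, fun t ht ↦ ?_, ?_⟩
  · rw [← compl_eq_univ_sdiff, Measure.restrict_apply hA.compl, compl_inter_self,
      measure_empty]
  · rw [Measure.restrict_apply (hN t ht)]
    exact hmax t ht
  · rintro ν₁ ν₂ rfl h₁ h₂
    have hν₁ : ν₁ ≪ ν₁ + ν₂ := Measure.AbsolutelyContinuous.rfl.add_right ν₂
    have h₁A : ν₁ (⋃₀ S)ᶜ = 0 := h₁.measure_compl_eq_zero fun t ht ↦ hν₁ (hmax t ht)
    obtain ⟨hrestrict, hrestrict_compl⟩ :=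
      Measure.restrict_add_eq_of_measure_compl_eq_zero h₁A (h₂.measure_sUnion_eq_zero hS hSN)
    exact ⟨hrestrict.symm, hrestrict_compl.symm⟩
end

section
/- Let 1 ≤ m ≤ n−1 be integers and let μ be a Radon measure on ℝ^n. Then μ restricted to the set {x ∈ ℝ^n : liminf_{r↓0} μ(B(x,r))/r^m = 0} is purely m-unrectifiable. Consequently, if μ is m-rectifiable, then liminf_{r↓0} μ(B(x,r))/r^m > 0 for μ-a.e. x ∈ ℝ^n. -/
/-!
At a point of vanishing lower density there are arbitrarily small radii `r` with
`μ(B(x,r)) ≤ c rᵐ`. By Besicovitch, almost all of `Γ ∩ {Θᵐ_* = 0}`, where `Γ = f([0,1]ᵐ)` with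
`f` `K`-Lipschitz, is covered by disjoint such balls centred on `Γ`. Pulling them back by `f`
(radii divided by `K + 1`) gives disjoint balls in a fixed cube, so `∑ rᵢᵐ ≤ (2(K+1))ᵐ` and
`μ(Γ ∩ {Θᵐ_* = 0}) ≤ c (2(K+1))ᵐ` for every `c > 0`. A rectifiable measure is carried by
countably many such `Γ`, so it gives no mass to `{Θᵐ_* = 0}`.
-/

open MeasureTheory Metric Set Filter
open scoped ENNReal NNReal Topology

noncomputable section

/-- A Radon measure is `m`-rectifiable if it is carried by countably many images of Lipschitz
maps `f : [0,1]^m → ℝⁿ`. -/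
def MRectifiable {n : ℕ} (m : ℕ) (μ : Measure (EuclideanSpace ℝ (Fin n))) : Prop :=
  ∃ (K : ℕ → ℝ≥0) (f : ℕ → (Fin m → ℝ) → EuclideanSpace ℝ (Fin n)),
    (∀ i, LipschitzOnWith (K i) (f i) (Icc 0 1)) ∧
    μ (univ \ ⋃ i, f i '' Icc 0 1) = 0

/-- A measure is purely `m`-unrectifiable if it vanishes on the image of every Lipschitz map
`f : [0,1]^m → ℝⁿ`. -/
def PurelyMUnrectifiable {n : ℕ} (m : ℕ) (μ : Measure (EuclideanSpace ℝ (Fin n))) : Prop :=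
  ∀ (K : ℝ≥0) (f : (Fin m → ℝ) → EuclideanSpace ℝ (Fin n)),
    LipschitzOnWith K f (Icc 0 1) → μ (f '' Icc 0 1) = 0

/-- The square of the homogeneous `m`-dimensional `L²` Jones beta number,
`β₂^{m,h}(μ,x,r)² = inf_L ∫_{B(x,r)} (dist(y,L)/r)² dμ(y)/rᵐ`, the infimum over all
`m`-dimensional affine subspaces `L` of `ℝⁿ`. -/
def betaMhSq {n : ℕ} (μ : Measure (EuclideanSpace ℝ (Fin n))) (m : ℕ)
    (x : EuclideanSpace ℝ (Fin n)) (r : ℝ) : ℝ≥0∞ :=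
  ⨅ L : {L : AffineSubspace ℝ (EuclideanSpace ℝ (Fin n)) // Module.finrank ℝ L.direction = m},
    (∫⁻ y in closedBall x r, ENNReal.ofReal
        ((infDist y (L.1 : Set (EuclideanSpace ℝ (Fin n))) / r) ^ 2) ∂μ) /
      ENNReal.ofReal (r ^ m)

/-- The `L²` Jones function `∫₀¹ β₂^{m,h}(μ,x,r)² dr/r`. -/
def jonesFnM {n : ℕ} (μ : Measure (EuclideanSpace ℝ (Fin n))) (m : ℕ)
    (x : EuclideanSpace ℝ (Fin n)) : ℝ≥0∞ :=
  ∫⁻ r in Ioc (0 : ℝ) 1, betaMhSq μ m x r / ENNReal.ofReal r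

open Function

def lowerDensity {α : Type*} [PseudoMetricSpace α] [MeasurableSpace α] (μ : Measure α) (m : ℕ)
    (x : α) : ℝ≥0∞ :=
  liminf (fun r : ℝ => μ (closedBall x r) / ENNReal.ofReal (r ^ m)) (𝓝[>] 0)

lemma ENNReal.eq_zero_of_forall_pos_le_mul {x C : ℝ≥0∞} (hC : C ≠ ⊤)
    (h : ∀ c : ℝ≥0∞, 0 < c → x ≤ c * C) : x = 0 := by
  have hlim : Tendsto (fun c : ℝ≥0∞ => c * C) (𝓝[>] 0) (𝓝 (0 * C)) :=
    ENNReal.Tendsto.mul_const (tendsto_nhdsWithin_of_tendsto_nhds tendsto_id) (Or.inr hC)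
  rw [zero_mul] at hlim
  exact nonpos_iff_eq_zero.1 (ge_of_tendsto hlim (eventually_nhdsWithin_of_forall h))

lemma exists_measure_closedBall_le_of_lowerDensity_lt {α : Type*} [PseudoMetricSpace α]
    [MeasurableSpace α] {μ : Measure α} {m : ℕ} {x : α} {c : ℝ≥0∞} (hx : lowerDensity μ m x < c)
    {δ : ℝ} (hδ : 0 < δ) :
    ∃ r ∈ Ioo 0 δ, μ (closedBall x r) ≤ c * ENNReal.ofReal (r ^ m) := by
  have hfreq := frequently_lt_of_liminf_lt (by isBoundedDefault) hx
  obtain ⟨r, hr, hlt⟩ := (nhdsGT_basis (0 : ℝ)).frequently_iff.1 hfreq δ hδ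
  have hr0 : ENNReal.ofReal (r ^ m) ≠ 0 := by
    simpa using pow_pos hr.1 m
  exact ⟨r, hr, (ENNReal.div_lt_iff (Or.inl hr0) (Or.inl ENNReal.ofReal_ne_top)).1 hlt |>.le⟩

theorem measure_inter_setOf_lowerDensity_eq_zero {α : Type*} [MetricSpace α]
    [SecondCountableTopology α] [MeasurableSpace α] [OpensMeasurableSpace α]
    [HasBesicovitchCovering α] (μ : Measure α) [SFinite μ] (m : ℕ) {S : Set α} {C : ℝ≥0∞}
    (hC : C ≠ ⊤)
    (hS : ∀ t ⊆ S, t.Countable → ∀ r : α → ℝ, (∀ x ∈ t, r x ∈ Ioo 0 1) →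
      t.PairwiseDisjoint (fun x => closedBall x (r x)) →
      ∑' x : t, ENNReal.ofReal (r x ^ m) ≤ C) :
    μ (S ∩ {x | lowerDensity μ m x = 0}) = 0 := by
  refine ENNReal.eq_zero_of_forall_pos_le_mul hC fun c hc => ?_
  set T := S ∩ {x | lowerDensity μ m x = 0}
  have hsmall : ∀ x ∈ T, ∀ δ > 0,
      ({r | μ (closedBall x r) ≤ c * ENNReal.ofReal (r ^ m)} ∩ Ioo 0 δ).Nonempty := by
    intro x hx δ hδ
    obtain ⟨r, hr, hle⟩ :=
      exists_measure_closedBall_le_of_lowerDensity_lt (hx.2.symm ▸ hc : lowerDensity μ m x < c) hδ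
    exact ⟨r, hle, hr⟩
  obtain ⟨t, r, htc, htT, hr, hcov, hdisj⟩ :=
    Besicovitch.exists_disjoint_closedBall_covering_ae μ _ T hsmall (fun _ => 1)
      (fun _ _ => one_pos)
  have hsum := hS t (htT.trans inter_subset_left) htc r (fun x hx => (hr x hx).2) hdisj
  calc μ T ≤ μ (T ∩ ⋃ x ∈ t, closedBall x (r x)) + μ (T \ ⋃ x ∈ t, closedBall x (r x)) :=
        measure_le_inter_add_sdiff μ _ _
    _ ≤ ∑' x : t, μ (closedBall x (r x)) + 0 :=
        add_le_add ((measure_mono inter_subset_right).trans (measure_biUnion_le μ htc _)) hcov.le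
    _ ≤ ∑' x : t, c * ENNReal.ofReal (r x ^ m) := by
        rw [add_zero]
        exact ENNReal.tsum_le_tsum fun x => (hr x x.2).1
    _ = c * ∑' x : t, ENNReal.ofReal (r x ^ m) := ENNReal.tsum_mul_left
    _ ≤ c * C := by gcongr

lemma tsum_ofReal_two_mul_pow_le_of_pairwise_disjoint_closedBall {ι : Type*} [Countable ι]
    {m : ℕ} {z : ι → Fin m → ℝ} {ρ : ι → ℝ} (hz : ∀ i, z i ∈ Icc 0 1) (hρ : ∀ i, ρ i ∈ Icc 0 1)
    (hd : Pairwise (Disjoint on fun i => closedBall (z i) (ρ i))) :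
    ∑' i, ENNReal.ofReal ((2 * ρ i) ^ m) ≤ ENNReal.ofReal (4 ^ m) := by
  have hball : ∀ i, closedBall (z i) (ρ i) ⊆ closedBall 0 2 := fun i => by
    refine closedBall_subset_closedBall' ?_
    have hnorm : ‖z i‖ ≤ 1 := (pi_norm_le_iff_of_nonneg zero_le_one).2 fun j => by
      have h0 : 0 ≤ z i j := (hz i).1 j
      have h1 : z i j ≤ 1 := (hz i).2 j
      rw [Real.norm_eq_abs, abs_le]
      constructor <;> linarith
    rw [dist_zero_right]
    linarith [(hρ i).2]
  calc ∑' i, ENNReal.ofReal ((2 * ρ i) ^ m) = ∑' i, volume (closedBall (z i) (ρ i)) := by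
        simp only [Real.volume_pi_closedBall _ (hρ _).1, Fintype.card_fin]
    _ = volume (⋃ i, closedBall (z i) (ρ i)) :=
        (measure_iUnion hd fun _ => measurableSet_closedBall).symm
    _ ≤ volume (closedBall (0 : Fin m → ℝ) 2) := measure_mono (iUnion_subset hball)
    _ = ENNReal.ofReal (4 ^ m) := by
        rw [Real.volume_pi_closedBall _ zero_le_two, Fintype.card_fin]
        norm_num

theorem LipschitzOnWith.tsum_ofReal_pow_le {E : Type*} [NormedAddCommGroup E] [NormedSpace ℝ E]
    {m : ℕ} {K : ℝ≥0} {f : (Fin m → ℝ) → E} (hf : LipschitzOnWith K f (Icc 0 1)) {t : Set E}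
    (htf : t ⊆ f '' Icc 0 1) (htc : t.Countable) {r : E → ℝ} (hr : ∀ x ∈ t, r x ∈ Ioc 0 1)
    (hd : t.PairwiseDisjoint fun x => closedBall x (r x)) :
    ∑' x : t, ENNReal.ofReal (r x ^ m) ≤ ENNReal.ofReal ((2 * (K + 1)) ^ m) := by
  have htf' : ∀ x ∈ t, ∃ y ∈ Icc 0 1, f y = x := htf
  choose! z hz hfz using htf'
  have : Countable t := htc.to_subtype
  set L : ℝ := K + 1
  have hL : 0 < L := by positivity
  have hpull : Pairwise (Disjoint on fun x : t => closedBall (z x) (r x / L)) := by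
    intro x y hxy
    have hdxy := hd x.2 y.2 (Subtype.coe_injective.ne hxy)
    rw [onFun, disjoint_closedBall_closedBall_iff (hr x x.2).1.le (hr y y.2).1.le]
      at hdxy
    have hlip := hf.dist_le_mul (z x) (hz x x.2) (z y) (hz y y.2)
    rw [hfz x x.2, hfz y y.2] at hlip
    refine closedBall_disjoint_closedBall ?_
    rw [← add_div, div_lt_iff₀ hL]
    nlinarith [dist_nonneg (x := z x) (y := z y)]
  have hρ : ∀ x : t, r x / L ∈ Icc 0 1 := fun x => by
    have := hr x x.2
    exact ⟨div_nonneg this.1.le hL.le, (div_le_one hL).2 (by linarith [this.2, K.coe_nonneg])⟩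
  calc ∑' x : t, ENNReal.ofReal (r x ^ m)
      = ∑' x : t, ENNReal.ofReal ((L / 2) ^ m) * ENNReal.ofReal ((2 * (r x / L)) ^ m) := by
        refine tsum_congr fun x => ?_
        rw [← ENNReal.ofReal_mul (pow_nonneg (half_pos hL).le _), ← mul_pow]
        field_simp
    _ = ENNReal.ofReal ((L / 2) ^ m) * ∑' x : t, ENNReal.ofReal ((2 * (r x / L)) ^ m) :=
        ENNReal.tsum_mul_left
    _ ≤ ENNReal.ofReal ((L / 2) ^ m) * ENNReal.ofReal (4 ^ m) := by
        gcongr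
        exact tsum_ofReal_two_mul_pow_le_of_pairwise_disjoint_closedBall (fun x => hz x x.2) hρ
          hpull
    _ = ENNReal.ofReal ((2 * L) ^ m) := by
        rw [← ENNReal.ofReal_mul (pow_nonneg (half_pos hL).le _), ← mul_pow]
        ring_nf

theorem MRectifiable.eq_zero_of_purelyMUnrectifiable {n m : ℕ}
    {μ ν : Measure (EuclideanSpace ℝ (Fin n))} (hμ : MRectifiable m μ)
    (hν : PurelyMUnrectifiable m ν) (hνμ : ν ≪ μ) : ν = 0 := by
  obtain ⟨K, f, hf, hnull⟩ := hμ
  rw [← Measure.measure_univ_eq_zero]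
  exact measure_mono_null (by rw [union_sdiff_self, union_univ])
    (measure_union_null (measure_iUnion_null fun i => hν _ _ (hf i)) (hνμ hnull))

theorem statement11_general {n m : ℕ}
    (μ : Measure (EuclideanSpace ℝ (Fin n))) [IsLocallyFiniteMeasure μ] :
    PurelyMUnrectifiable m (μ.restrict
      {x | liminf (fun r : ℝ => μ (closedBall x r) / ENNReal.ofReal (r ^ m)) (𝓝[>] 0) = 0}) ∧
    (MRectifiable m μ → ∀ᵐ x ∂μ,
      0 < liminf (fun r : ℝ => μ (closedBall x r) / ENNReal.ofReal (r ^ m)) (𝓝[>] 0)) := by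
  have hpure : PurelyMUnrectifiable m (μ.restrict {x | lowerDensity μ m x = 0}) := by
    intro K f hf
    have hΓ : MeasurableSet (f '' Icc 0 1) :=
      (isCompact_Icc.image_of_continuousOn hf.continuousOn).isClosed.measurableSet
    rw [Measure.restrict_apply hΓ]
    exact measure_inter_setOf_lowerDensity_eq_zero μ m ENNReal.ofReal_ne_top
      fun t ht htc r hr hd =>
        hf.tsum_ofReal_pow_le ht htc (fun x hx => Ioo_subset_Ioc_self (hr x hx)) hd
  refine ⟨hpure, fun hμ => ?_⟩
  have hnull := hμ.eq_zero_of_purelyMUnrectifiable hpure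
    (Measure.absolutelyContinuous_of_le Measure.restrict_le_self)
  rw [Measure.restrict_eq_zero] at hnull
  rw [ae_iff]
  simpa [pos_iff_ne_zero, lowerDensity] using hnull

/-- The restriction of a Radon measure to the set where the lower `m`-dimensional density
vanishes is purely `m`-unrectifiable; consequently an `m`-rectifiable measure has positive
lower density almost everywhere. -/
theorem statement11 {n m : ℕ} (hm : 1 ≤ m) (hmn : m + 1 ≤ n)
    (μ : Measure (EuclideanSpace ℝ (Fin n))) [IsLocallyFiniteMeasure μ] :
    PurelyMUnrectifiable m (μ.restrict
      {x | liminf (fun r : ℝ => μ (closedBall x r) / ENNReal.ofReal (r ^ m)) (𝓝[>] 0) = 0}) ∧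
    (MRectifiable m μ → ∀ᵐ x ∂μ,
      0 < liminf (fun r : ℝ => μ (closedBall x r) / ENNReal.ofReal (r ^ m)) (𝓝[>] 0)) :=
  statement11_general μ
end
end

section
/- (Martín–Mattila) Let 1 ≤ m ≤ n−1 be integers and let s ∈ [m, n). Let f_1, …, f_k : ℝ^n → ℝ^n be contracting similarities, i.e., there are ratios r_i ∈ (0,1) with |f_i(x) − f_i(y)| = r_i |x − y| for all x, y, satisfying Σ_{i=1}^k r_i^s = 1. Let S ⊂ ℝ^n be the nonempty compact set with S = ⋃_{i=1}^k f_i(S), and assume f_i(S) ∩ f_j(S) = ∅ for all i ≠ j. Then H^s restricted to S is singular to (m/s)-Hölder m-cubes: H^s(S ∩ Γ) = 0 for every (m/s)-Hölder m-cube Γ ⊂ ℝ^n. -/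
open MeasureTheory Metric Set Filter
open scoped ENNReal NNReal Topology

noncomputable section

/-- An `(m/s)`-Hölder `m`-cube in `ℝⁿ`: the image of a map `f : [0,1]^m → ℝⁿ` satisfying
`|f(x) − f(y)| ≤ H |x − y|^{m/s}` for some constant `H < ∞`. -/
def IsHolderCube {n : ℕ} (m : ℕ) (s : ℝ) (Γ : Set (EuclideanSpace ℝ (Fin n))) : Prop :=
  ∃ (H : ℝ) (f : (Fin m → ℝ) → EuclideanSpace ℝ (Fin n)),
    (∀ x ∈ Icc (0 : Fin m → ℝ) 1, ∀ y ∈ Icc (0 : Fin m → ℝ) 1,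
      dist (f x) (f y) ≤ H * dist x y ^ ((m : ℝ) / s)) ∧
    Γ = f '' Icc 0 1

/-- A `(1/s)`-Hölder curve in `ℝⁿ`: the image of a map `f : [0,1] → ℝⁿ` satisfying
`|f(x) − f(y)| ≤ H |x − y|^{1/s}` for some constant `H < ∞`. -/
def IsHolderCurve {n : ℕ} (s : ℝ) (Γ : Set (EuclideanSpace ℝ (Fin n))) : Prop :=
  ∃ (H : ℝ) (f : ℝ → EuclideanSpace ℝ (Fin n)),
    (∀ x ∈ Icc (0 : ℝ) 1, ∀ y ∈ Icc (0 : ℝ) 1,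
      dist (f x) (f y) ≤ H * |x - y| ^ (1 / s)) ∧
    Γ = f '' Icc 0 1

/-!
Pull the self-similar structure back through the Hölder parametrisation `g` of the cube. For a
word `w` let `T w` be the set of parameters that `g` maps into the cylinder `S_w = f_w(S)`. The
first-level pieces are `δ`-separated, so the cylinders of two siblings `i w`, `j w` are
`δ r_w`-separated, and by Hölder continuity their preimages are `τ_w = (δ r_w / H)^{s/m}`-separated.
Hence the `τ_w / 2`-neighbourhoods of the sets `T w` form a nested tree with disjoint siblings, and
each of them with `T w ≠ ∅` contains a ball of radius comparable to `τ_w` that misses all its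
children. Such a ball has volume comparable to `τ_w^m ≈ r_w^s`, so summing over the tree,
`∑_p ∑_{|w| = p, T w ≠ ∅} r_w^s` is at most a multiple of the volume of the root neighbourhood.
The generation sums therefore tend to `0`, and they bound the `H^s`-sums of the coverings of
`S ∩ g([0,1]^m)` by the cylinders of generation `p`.
-/

open Module

theorem hausdorffMeasure_eq_zero_of_tsum_sum_ne_top {X : Type*} [EMetricSpace X]
    [MeasurableSpace X] [BorelSpace X] {ι : ℕ → Type*} [∀ p, Fintype (ι p)] {s : ℝ} {F : Set X}
    (C : ∀ p, ι p → Set X) {R : ℕ → ℝ≥0∞} (hR : Tendsto R atTop (𝓝 0))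
    (hdiam : ∀ p i, ediam (C p i) ≤ R p) (hcover : ∀ p, F ⊆ ⋃ i, C p i)
    (hsum : ∑' p, ∑ i, ediam (C p i) ^ s ≠ ∞) : μH[s] F = 0 :=
  le_antisymm ((Measure.hausdorffMeasure_le_liminf_sum s F R hR C (.of_forall hdiam)
    (.of_forall hcover)).trans (ENNReal.tendsto_atTop_zero_of_tsum_ne_top hsum).liminf_eq.le)
    zero_le

theorem exists_pos_forall_le_dist_of_pairwise_disjoint {ι X : Type*} [Finite ι]
    [MetricSpace X] {K : ι → Set X} (hK : ∀ i, IsCompact (K i))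
    (hdisj : Pairwise fun i j => Disjoint (K i) (K j)) :
    ∃ δ > 0, ∀ i j, i ≠ j → ∀ x ∈ K i, ∀ y ∈ K j, δ ≤ dist x y := by
  have h : ∀ i j, ∀ᶠ δ in 𝓝[>] (0 : ℝ), i ≠ j → ∀ x ∈ K i, ∀ y ∈ K j, δ ≤ dist x y := by
    intro i j
    by_cases hij : i = j
    · exact .of_forall fun _ h => absurd hij h
    obtain ⟨r, hr, hlt⟩ := exists_pos_forall_lt_edist (hK i) (hK j).isClosed (hdisj hij)
    filter_upwards [Ioo_mem_nhdsGT (NNReal.coe_pos.2 hr)] with δ hδ _ x hx y hy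
    have := hlt x hx y hy
    rw [edist_nndist, ENNReal.coe_lt_coe, ← NNReal.coe_lt_coe, coe_nndist] at this
    linarith [hδ.2]
  obtain ⟨δ, hδ, hpos⟩ :=
    ((eventually_all.2 fun i => eventually_all.2 (h i)).and self_mem_nhdsWithin).exists
  exact ⟨δ, hpos, hδ⟩

theorem exists_mem_Ioo_forall_le_of_lt_one {ι : Type*} [Finite ι] {a : ι → ℝ}
    (h : ∀ i, a i < 1) : ∃ ρ ∈ Ioo (0 : ℝ) 1, ∀ i, a i ≤ ρ := by
  obtain ⟨ρ, hρa, hρ⟩ := ((eventually_all.2 fun i => Ioo_mem_nhdsLT (h i)).and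
    (Ioo_mem_nhdsLT zero_lt_one)).exists
  exact ⟨ρ, hρ, fun i => (hρa i).1.le⟩

section Words

variable {ι X : Type*}

/-- `wordMap f [i₁, …, iₚ] = f iₚ ∘ ⋯ ∘ f i₁`, so that the cylinder of `i :: l` lies inside the
cylinder of `l`. -/
def wordMap (f : ι → X → X) : List ι → X → X
  | [] => id
  | i :: l => wordMap f l ∘ f i

theorem wordMap_cons_image (f : ι → X → X) (i : ι) (l : List ι) (S : Set X) :
    wordMap f (i :: l) '' S = wordMap f l '' (f i '' S) :=
  image_comp _ _ _

theorem subset_iUnion_wordMap_image {f : ι → X → X} {S : Set X} (hS : S ⊆ ⋃ i, f i '' S) :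
    ∀ p : ℕ, S ⊆ ⋃ w : Fin p → ι, wordMap f (List.ofFn w) '' S
  | 0 => fun x hx => mem_iUnion.2 ⟨Fin.elim0, by simpa [wordMap] using hx⟩
  | p + 1 => by
    intro x hx
    obtain ⟨w, y, hy, rfl⟩ := mem_iUnion.1 (subset_iUnion_wordMap_image hS p hx)
    obtain ⟨i, z, hz, rfl⟩ := mem_iUnion.1 (hS hy)
    refine mem_iUnion.2 ⟨Fin.cons i w, z, hz, ?_⟩
    simp [List.ofFn_succ, wordMap]

theorem dist_wordMap [PseudoMetricSpace X] {f : ι → X → X} {r : ι → ℝ}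
    (hf : ∀ i x y, dist (f i x) (f i y) = r i * dist x y) (l : List ι) (x y : X) :
    dist (wordMap f l x) (wordMap f l y) = (l.map r).prod * dist x y := by
  induction l generalizing x y with
  | nil => simp [wordMap]
  | cons i l ih =>
    simp only [wordMap, Function.comp_apply, ih, hf, List.map_cons, List.prod_cons]
    ring

theorem ediam_wordMap_image_le [PseudoMetricSpace X] {f : ι → X → X} {r : ι → ℝ}
    (hf : ∀ i x y, dist (f i x) (f i y) = r i * dist x y) (l : List ι) (S : Set X) :
    ediam (wordMap f l '' S) ≤ ENNReal.ofReal (l.map r).prod * ediam S := by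
  refine (LipschitzWith.of_dist_le_mul fun x y => ?_).ediam_image_le S
  rw [dist_wordMap hf]
  exact mul_le_mul_of_nonneg_right (Real.le_coe_toNNReal _) dist_nonneg

end Words

section GenerationSums

variable {ι : Type*} [Fintype ι]

theorem sum_ofFn_succ {M : Type*} [AddCommMonoid M] (φ : List ι → M) (p : ℕ) :
    ∑ w : Fin (p + 1) → ι, φ (List.ofFn w) = ∑ w : Fin p → ι, ∑ i, φ (i :: List.ofFn w) := by
  rw [← (Fin.consEquiv fun _ => ι).sum_comp, Fintype.sum_prod_type, Finset.sum_comm]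
  simp [List.ofFn_succ]

theorem tsum_sum_ofFn_le {φ g : List ι → ℝ≥0∞} (h : ∀ l, ∑ i, φ (i :: l) + g l ≤ φ l) :
    ∑' p, ∑ w : Fin p → ι, g (List.ofFn w) ≤ φ [] := by
  have partial_le : ∀ P, ∑ w : Fin P → ι, φ (List.ofFn w)
      + ∑ p ∈ Finset.range P, ∑ w : Fin p → ι, g (List.ofFn w) ≤ φ [] := by
    intro P
    induction P with
    | zero => simp
    | succ P ih =>
      calc _ = ∑ w : Fin P → ι, (∑ i, φ (i :: List.ofFn w) + g (List.ofFn w))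
              + ∑ p ∈ Finset.range P, ∑ w : Fin p → ι, g (List.ofFn w) := by
            rw [sum_ofFn_succ, Finset.sum_range_succ, Finset.sum_add_distrib]; ring
        _ ≤ _ := by gcongr with w; exact h _
        _ ≤ φ [] := ih
  rw [ENNReal.tsum_eq_iSup_nat]
  exact iSup_le fun P => le_add_self.trans (partial_le P)

end GenerationSums

section Geometry

variable {E : Type*} [NormedAddCommGroup E] [NormedSpace ℝ E] [Nontrivial E] {T : Set E}

theorem exists_infDist_eq (hne : T.Nonempty) (hT : Bornology.IsBounded T) {c : ℝ} (hc : 0 ≤ c) :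
    ∃ z, infDist z T = c := by
  obtain ⟨y, hy⟩ := hne
  obtain ⟨x, hx⟩ : ∃ x, x ∉ thickening c T := by
    by_contra! h
    exact NormedSpace.unbounded_univ ℝ E (hT.thickening.subset fun x _ => h x)
  have hcx : c ≤ infDist x T := not_lt.1 ((mem_thickening_iff_infDist_lt ⟨y, hy⟩).not.1 hx)
  obtain ⟨z, hz⟩ := intermediate_value_univ y x (continuous_infDist_pt T)
    ⟨(infDist_zero_of_mem hy).le.trans hc, hcx⟩
  exact ⟨z, hz⟩

theorem exists_ball_subset_thickening_diff (hne : T.Nonempty) (hT : Bornology.IsBounded T)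
    {a b : ℝ} (ha : 0 ≤ a) (hab : a ≤ b) :
    ∃ z, ball z ((b - a) / 2) ⊆ thickening b T \ thickening a T := by
  obtain ⟨z, hz⟩ := exists_infDist_eq hne hT (c := (a + b) / 2) (by linarith)
  refine ⟨z, fun x hx => ?_⟩
  have hzx : |infDist x T - infDist z T| ≤ dist x z := abs_sub_le_iff.2
    ⟨by linarith [infDist_le_infDist_add_dist (x := x) (y := z) (s := T)],
     by linarith [infDist_le_infDist_add_dist (x := z) (y := x) (s := T), dist_comm x z]⟩
  rw [mem_ball] at hx
  simp only [Set.mem_sdiff, mem_thickening_iff_infDist_lt hne, not_lt]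
  constructor <;> linarith [abs_le.1 hzx]

end Geometry

section Packing

variable {ι : Type*} {τ : List ι → ℝ} {ρ : ℝ}

theorem thickening_cons_subset {X : Type*} [PseudoMetricSpace X] {T : List ι → Set X}
    (hT : ∀ i l, T (i :: l) ⊆ T l) (hτρ : ∀ i l, τ (i :: l) ≤ ρ * τ l) (i : ι) (l : List ι) :
    thickening (τ (i :: l) / 2) (T (i :: l)) ⊆ thickening (ρ * τ l / 2) (T l) :=
  (thickening_subset_of_subset _ (hT i l)).trans (thickening_mono (by linarith [hτρ i l]) _)

theorem disjoint_thickening_cons {X : Type*} [PseudoMetricSpace X] {T : List ι → Set X}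
    (hτ : ∀ l, 0 < τ l) (hρ : ρ < 1) (hτρ : ∀ i l, τ (i :: l) ≤ ρ * τ l)
    (hsep : ∀ l i j, i ≠ j → ∀ x ∈ T (i :: l), ∀ y ∈ T (j :: l), τ l ≤ dist x y)
    (l : List ι) {i j : ι} (hij : i ≠ j) :
    Disjoint (thickening (τ (i :: l) / 2) (T (i :: l)))
      (thickening (τ (j :: l) / 2) (T (j :: l))) := by
  refine Set.disjoint_left.2 fun z hzi hzj => ?_
  obtain ⟨x, hx, hzx⟩ := mem_thickening_iff.1 hzi
  obtain ⟨y, hy, hzy⟩ := mem_thickening_iff.1 hzj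
  have hρτ : ρ * τ l < τ l := mul_lt_of_lt_one_left (hτ l) hρ
  linarith [hsep l i j hij x hx y hy, dist_triangle_left x y z, hτρ i l, hτρ j l]

open Classical in
theorem sum_addHaar_thickening_cons_add_le {E : Type*} [NormedAddCommGroup E] [NormedSpace ℝ E]
    [FiniteDimensional ℝ E] [Nontrivial E] [MeasurableSpace E] [BorelSpace E] (μ : Measure E)
    [μ.IsAddHaarMeasure] [Fintype ι] {T : List ι → Set E}
    (hT : ∀ i l, T (i :: l) ⊆ T l) (hτ : ∀ l, 0 < τ l) (hρ₀ : 0 ≤ ρ) (hρ : ρ < 1)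
    (hτρ : ∀ i l, τ (i :: l) ≤ ρ * τ l)
    (hsep : ∀ l i j, i ≠ j → ∀ x ∈ T (i :: l), ∀ y ∈ T (j :: l), τ l ≤ dist x y)
    {l : List ι} (hTl : Bornology.IsBounded (T l)) :
    ∑ i, μ (thickening (τ (i :: l) / 2) (T (i :: l)))
      + ENNReal.ofReal (((1 - ρ) / 4) ^ finrank ℝ E) * μ (ball 0 1)
        * (if (T l).Nonempty then ENNReal.ofReal (τ l ^ finrank ℝ E) else 0)
      ≤ μ (thickening (τ l / 2) (T l)) := by
  rcases (T l).eq_empty_or_nonempty with hempty | hne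
  · have hchild : ∀ i, T (i :: l) = ∅ := fun i => subset_empty_iff.1 (hempty ▸ hT i l)
    simp [hchild, hempty]
  obtain ⟨z, hz⟩ := exists_ball_subset_thickening_diff hne hTl
    (a := ρ * τ l / 2) (b := τ l / 2) (by have := hτ l; positivity)
    (by nlinarith [hτ l])
  have hchildren : ⋃ i, thickening (τ (i :: l) / 2) (T (i :: l))
      ⊆ thickening (ρ * τ l / 2) (T l) := iUnion_subset (thickening_cons_subset hT hτρ · l)
  have hball : μ (ball z ((τ l / 2 - ρ * τ l / 2) / 2))
      = ENNReal.ofReal (((1 - ρ) / 4) ^ finrank ℝ E) * μ (ball 0 1)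
        * ENNReal.ofReal (τ l ^ finrank ℝ E) := by
    rw [Measure.addHaar_ball _ _ (by nlinarith [hτ l]), show (τ l / 2 - ρ * τ l / 2) / 2
      = (1 - ρ) / 4 * τ l by ring, mul_pow, ENNReal.ofReal_mul (by have := hτ l; positivity)]
    ring
  calc _ = μ ((⋃ i, thickening (τ (i :: l) / 2) (T (i :: l)))
        ∪ ball z ((τ l / 2 - ρ * τ l / 2) / 2)) := by
        rw [if_pos hne, ← hball, measure_union _ measurableSet_ball,
          measure_iUnion (fun i j hij => disjoint_thickening_cons hτ hρ hτρ hsep l hij)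
            (fun _ => isOpen_thickening.measurableSet), tsum_fintype]
        exact Set.disjoint_of_subset_left hchildren (Set.disjoint_of_subset_right hz
          (disjoint_sdiff_right))
    _ ≤ _ := measure_mono (union_subset (hchildren.trans (thickening_mono (by nlinarith [hτ l]) _))
        (hz.trans sdiff_subset))

open Classical in
theorem tsum_sum_ofReal_pow_ne_top_of_separated {E : Type*} [NormedAddCommGroup E]
    [NormedSpace ℝ E] [FiniteDimensional ℝ E] [Nontrivial E] [Fintype ι] {T : List ι → Set E}
    (hT₀ : Bornology.IsBounded (T [])) (hT : ∀ i l, T (i :: l) ⊆ T l)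
    (hτ : ∀ l, 0 < τ l) (hρ₀ : 0 ≤ ρ) (hρ : ρ < 1) (hτρ : ∀ i l, τ (i :: l) ≤ ρ * τ l)
    (hsep : ∀ l i j, i ≠ j → ∀ x ∈ T (i :: l), ∀ y ∈ T (j :: l), τ l ≤ dist x y) :
    ∑' p, ∑ w : Fin p → ι, (if (T (List.ofFn w)).Nonempty
      then ENNReal.ofReal (τ (List.ofFn w) ^ finrank ℝ E) else 0) ≠ ∞ := by
  borelize E
  set c := ENNReal.ofReal (((1 - ρ) / 4) ^ finrank ℝ E) * Measure.addHaar (ball (0 : E) 1)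
  have hc : c ≠ 0 := mul_ne_zero (by simpa using pow_pos (by linarith : 0 < (1 - ρ) / 4) _)
    (measure_ball_pos _ _ one_pos).ne'
  have hT_bdd : ∀ l, Bornology.IsBounded (T l) := by
    intro l
    induction l with
    | nil => exact hT₀
    | cons i l ih => exact ih.subset (hT i l)
  have key := tsum_sum_ofFn_le (φ := fun l => Measure.addHaar (thickening (τ l / 2) (T l)))
    fun l => sum_addHaar_thickening_cons_add_le _ hT hτ hρ₀ hρ hτρ hsep (hT_bdd l)
  simp_rw [← Finset.mul_sum, ENNReal.tsum_mul_left] at key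
  intro htop
  rw [htop, ENNReal.mul_top hc, top_le_iff] at key
  exact hT₀.thickening.measure_lt_top.ne key

end Packing

theorem rpow_inv_le_dist_of_mem_preimage_wordMap {ι E X : Type*} [PseudoMetricSpace E]
    [PseudoMetricSpace X] {f : ι → X → X} {r : ι → ℝ}
    (hf : ∀ i x y, dist (f i x) (f i y) = r i * dist x y) (hr : ∀ i, 0 ≤ r i) {S : Set X}
    {δ : ℝ} (hδ : 0 ≤ δ) (hS : ∀ i j, i ≠ j → ∀ u ∈ f i '' S, ∀ v ∈ f j '' S, δ ≤ dist u v)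
    {A : Set E} {g : E → X} {H α : ℝ} (hH : 0 < H) (hα : 0 < α)
    (hg : ∀ x ∈ A, ∀ y ∈ A, dist (g x) (g y) ≤ H * dist x y ^ α)
    {l : List ι} {i j : ι} (hij : i ≠ j) {x y : E}
    (hx : x ∈ A ∩ g ⁻¹' (wordMap f (i :: l) '' S)) (hy : y ∈ A ∩ g ⁻¹' (wordMap f (j :: l) '' S)) :
    (δ / H * (l.map r).prod) ^ α⁻¹ ≤ dist x y := by
  obtain ⟨hxA, u, hu, hux⟩ := hx
  obtain ⟨hyA, v, hv, hvy⟩ := hy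
  have hprod : 0 ≤ (l.map r).prod := List.prod_nonneg (by simpa using fun i _ => hr i)
  have hgxy : (l.map r).prod * δ ≤ dist (g x) (g y) := by
    rw [← hux, ← hvy]
    refine le_of_le_of_eq ?_ (dist_wordMap hf l (f i u) (f j v)).symm
    exact mul_le_mul_of_nonneg_left
      (hS i j hij _ (mem_image_of_mem _ hu) _ (mem_image_of_mem _ hv)) hprod
  refine (Real.rpow_inv_le_iff_of_pos (by positivity) dist_nonneg hα).2 ?_
  rw [div_mul_eq_mul_div, div_le_iff₀' hH, mul_comm δ]
  exact hgxy.trans (hg x hxA y hyA)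

open Classical in
theorem tsum_sum_ofReal_prod_rpow_ne_top_of_holderOn {ι X E : Type*} [Fintype ι]
    [MetricSpace X] [NormedAddCommGroup E] [NormedSpace ℝ E] [FiniteDimensional ℝ E]
    [Nontrivial E] {f : ι → X → X} {r : ι → ℝ} (hr : ∀ i, r i ∈ Ioo (0 : ℝ) 1)
    (hf : ∀ i x y, dist (f i x) (f i y) = r i * dist x y) {S : Set X} (hS : IsCompact S)
    (hfS : ∀ i, f i '' S ⊆ S) (hdisj : Pairwise fun i j => Disjoint (f i '' S) (f j '' S))
    {s : ℝ} (hs : 0 < s) {A : Set E} (hA : Bornology.IsBounded A) {g : E → X} {H : ℝ}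
    (hg : ∀ x ∈ A, ∀ y ∈ A, dist (g x) (g y) ≤ H * dist x y ^ (finrank ℝ E / s)) :
    ∑' p, ∑ w : Fin p → ι, (if (A ∩ g ⁻¹' (wordMap f (List.ofFn w) '' S)).Nonempty
      then ENNReal.ofReal (((List.ofFn w).map r).prod ^ s) else 0) ≠ ∞ := by
  set d := finrank ℝ E
  have hd : (0 : ℝ) < d := Nat.cast_pos.2 finrank_pos
  obtain ⟨H, hH, hg⟩ : ∃ H > 0, ∀ x ∈ A, ∀ y ∈ A, dist (g x) (g y) ≤ H * dist x y ^ (d / s) :=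
    ⟨max H 1, by positivity, fun x hx y hy =>
      (hg x hx y hy).trans (by gcongr; exact le_max_left _ _)⟩
  have hf_cont : ∀ i, Continuous (f i) := fun i =>
    (LipschitzWith.of_dist_le_mul (K := (r i).toNNReal) fun x y => by
      rw [hf, Real.coe_toNNReal _ (hr i).1.le]).continuous
  obtain ⟨δ, hδ, hsepS⟩ := exists_pos_forall_le_dist_of_pairwise_disjoint
    (fun i => hS.image (hf_cont i)) hdisj
  obtain ⟨R, ⟨hR₀, hR₁⟩, hrR⟩ := exists_mem_Ioo_forall_le_of_lt_one fun i => (hr i).2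
  set T : List ι → Set E := fun l => A ∩ g ⁻¹' (wordMap f l '' S)
  set τ : List ι → ℝ := fun l => (δ / H * (l.map r).prod) ^ (s / d) with hτ_def
  have hprod_pos : ∀ l : List ι, 0 < (l.map r).prod := fun l =>
    List.prod_pos (by simpa using fun i _ => (hr i).1)
  have hτ : ∀ l, 0 < τ l := fun l => by have := hprod_pos l; positivity
  have hτρ : ∀ i l, τ (i :: l) ≤ R ^ (s / d) * τ l := by
    intro i l
    simp only [hτ_def, List.map_cons, List.prod_cons, mul_left_comm _ (r i)]
    rw [Real.mul_rpow (hr i).1.le (by have := hprod_pos l; positivity)]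
    exact mul_le_mul_of_nonneg_right (Real.rpow_le_rpow (hr i).1.le (hrR i) (by positivity))
      (hτ l).le
  have hsep : ∀ l i j, i ≠ j → ∀ x ∈ T (i :: l), ∀ y ∈ T (j :: l), τ l ≤ dist x y :=
    fun l i j hij x hx y hy => by
      simpa [hτ_def, inv_div] using rpow_inv_le_dist_of_mem_preimage_wordMap hf
        (fun i => (hr i).1.le) hδ.le hsepS hH (by positivity) hg hij hx hy
  have hpack := tsum_sum_ofReal_pow_ne_top_of_separated (hA.subset inter_subset_left)
    (fun i l => inter_subset_inter_right _ (preimage_mono (by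
      rw [wordMap_cons_image]; exact image_mono (hfS i)))) hτ
    (by positivity) (Real.rpow_lt_one hR₀.le hR₁ (by positivity)) hτρ hsep
  have hτ_pow : ∀ l, (l.map r).prod ^ s = (H / δ) ^ s * τ l ^ d := fun l => by
    have := hprod_pos l
    rw [hτ_def, ← Real.rpow_natCast, ← Real.rpow_mul (by positivity), div_mul_cancel₀ s hd.ne',
      ← Real.mul_rpow (by positivity) (by positivity)]
    field_simp
  have hterm : ∀ l, (if (T l).Nonempty then ENNReal.ofReal ((l.map r).prod ^ s) else 0)
      = ENNReal.ofReal ((H / δ) ^ s) * (if (T l).Nonempty then ENNReal.ofReal (τ l ^ d) else 0) :=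
    fun l => by split_ifs <;> simp [hτ_pow, ENNReal.ofReal_mul (by positivity : 0 ≤ (H / δ) ^ s)]
  refine ne_of_eq_of_ne (tsum_congr fun p => Finset.sum_congr rfl fun w _ => hterm _) ?_
  simp_rw [← Finset.mul_sum, ENNReal.tsum_mul_left]
  exact ENNReal.mul_ne_top ENNReal.ofReal_ne_top hpack

theorem hausdorffMeasure_inter_image_eq_zero_of_holderOn {ι X E : Type*} [Fintype ι]
    [MetricSpace X] [MeasurableSpace X] [BorelSpace X] [NormedAddCommGroup E] [NormedSpace ℝ E]
    [FiniteDimensional ℝ E] [Nontrivial E] {f : ι → X → X} {r : ι → ℝ}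
    (hr : ∀ i, r i ∈ Ioo (0 : ℝ) 1) (hf : ∀ i x y, dist (f i x) (f i y) = r i * dist x y)
    {S : Set X} (hS : IsCompact S) (hself : S = ⋃ i, f i '' S)
    (hdisj : Pairwise fun i j => Disjoint (f i '' S) (f j '' S)) {s : ℝ} (hs : 0 < s)
    {A : Set E} (hA : Bornology.IsBounded A) {g : E → X} {H : ℝ}
    (hg : ∀ x ∈ A, ∀ y ∈ A, dist (g x) (g y) ≤ H * dist x y ^ (finrank ℝ E / s)) :
    μH[s] (S ∩ g '' A) = 0 := by
  classical
  have hfS : ∀ i, f i '' S ⊆ S := fun i => (subset_iUnion (fun i => f i '' S) i).trans hself.ge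
  have hsum := tsum_sum_ofReal_prod_rpow_ne_top_of_holderOn hr hf hS hfS hdisj hs hA hg
  obtain ⟨R, ⟨hR₀, hR₁⟩, hrR⟩ := exists_mem_Ioo_forall_le_of_lt_one fun i => (hr i).2
  have hdiam : ∀ l, ediam (wordMap f l '' S ∩ g '' A) ^ s ≤ ediam S ^ s
      * (if (A ∩ g ⁻¹' (wordMap f l '' S)).Nonempty
        then ENNReal.ofReal ((l.map r).prod ^ s) else 0) := by
    intro l
    split_ifs with hne
    · calc ediam (wordMap f l '' S ∩ g '' A) ^ s
          ≤ (ENNReal.ofReal (l.map r).prod * ediam S) ^ s := by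
            gcongr
            exact (ediam_mono inter_subset_left).trans (ediam_wordMap_image_le hf l S)
        _ = _ := by
          rw [ENNReal.mul_rpow_of_nonneg _ _ hs.le, ENNReal.ofReal_rpow_of_nonneg
            (List.prod_nonneg (by simpa using fun i _ => (hr i).1.le)) hs.le, mul_comm]
    · have hempty : wordMap f l '' S ∩ g '' A = ∅ := by
        refine eq_empty_of_forall_notMem fun x ⟨_, a, ha, hax⟩ => hne ⟨a, ha, ?_⟩
        rwa [mem_preimage, hax]
      simp [hempty, ENNReal.zero_rpow_of_pos hs]
  refine hausdorffMeasure_eq_zero_of_tsum_sum_ne_top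
    (fun p (w : Fin p → ι) => wordMap f (List.ofFn w) '' S ∩ g '' A)
    (R := fun p => ENNReal.ofReal (R ^ p) * ediam S) ?_ ?_ ?_ ?_
  · simpa using ENNReal.Tendsto.mul_const (ENNReal.tendsto_ofReal
      (tendsto_pow_atTop_nhds_zero_of_lt_one hR₀.le hR₁)) (.inr hS.isBounded.ediam_ne_top)
  · intro p w
    refine (ediam_mono inter_subset_left).trans ((ediam_wordMap_image_le hf _ S).trans ?_)
    gcongr
    rw [List.map_ofFn, List.prod_ofFn]
    exact (Finset.prod_le_prod (fun i _ => (hr _).1.le) fun i _ => hrR _).trans (by simp)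
  · rintro p x ⟨hxS, hxA⟩
    obtain ⟨w, hw⟩ := mem_iUnion.1 (subset_iUnion_wordMap_image hself.le p hxS)
    exact mem_iUnion.2 ⟨w, hw, hxA⟩
  · have hS_top : ediam S ^ s ≠ ∞ := ENNReal.rpow_ne_top_of_nonneg hs.le hS.isBounded.ediam_ne_top
    refine (lt_of_le_of_lt ?_ (ENNReal.mul_lt_top hS_top.lt_top hsum.lt_top)).ne
    rw [← ENNReal.tsum_mul_left]
    exact ENNReal.tsum_le_tsum fun p => by
      rw [Finset.mul_sum]
      exact Finset.sum_le_sum fun w _ => hdiam _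

theorem statement13_general {n m : ℕ} (hm : 1 ≤ m)
    (s : ℝ) (hs : (m : ℝ) ≤ s)
    (k : ℕ) (f : Fin k → EuclideanSpace ℝ (Fin n) → EuclideanSpace ℝ (Fin n))
    (r : Fin k → ℝ) (hr : ∀ i, r i ∈ Ioo (0 : ℝ) 1)
    (hsim : ∀ i x y, dist (f i x) (f i y) = r i * dist x y)
    (S : Set (EuclideanSpace ℝ (Fin n))) (hScpt : IsCompact S)
    (hself : S = ⋃ i, f i '' S)
    (hdisj : ∀ i j, i ≠ j → Disjoint (f i '' S) (f j '' S)) :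
    ∀ Γ : Set (EuclideanSpace ℝ (Fin n)), IsHolderCube m s Γ → μH[s] (S ∩ Γ) = 0 := by
  rintro Γ ⟨H, g, hg, rfl⟩
  have : NeZero m := ⟨by omega⟩
  have hm₀ : (0 : ℝ) < m := by exact_mod_cast hm
  refine hausdorffMeasure_inter_image_eq_zero_of_holderOn hr hsim hScpt hself
    (fun i j => hdisj i j) (hm₀.trans_le hs) (isBounded_Icc 0 1) (H := H) ?_
  rwa [finrank_fin_fun]

/-- **Martín–Mattila.** If `S` is a self-similar set of dimension `s ∈ [m, n)` whose defining
pieces `f_i(S)` are pairwise disjoint, then `H^s` restricted to `S` is singular to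
`(m/s)`-Hölder `m`-cubes. -/
theorem statement13 {n m : ℕ} (hm : 1 ≤ m) (hmn : m + 1 ≤ n)
    (s : ℝ) (hs : (m : ℝ) ≤ s) (hsn : s < n)
    (k : ℕ) (f : Fin k → EuclideanSpace ℝ (Fin n) → EuclideanSpace ℝ (Fin n))
    (r : Fin k → ℝ) (hr : ∀ i, r i ∈ Ioo (0 : ℝ) 1)
    (hsim : ∀ i x y, dist (f i x) (f i y) = r i * dist x y)
    (hsum : ∑ i, r i ^ s = 1)
    (S : Set (EuclideanSpace ℝ (Fin n))) (hSne : S.Nonempty) (hScpt : IsCompact S)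
    (hself : S = ⋃ i, f i '' S)
    (hdisj : ∀ i j, i ≠ j → Disjoint (f i '' S) (f j '' S)) :
    ∀ Γ : Set (EuclideanSpace ℝ (Fin n)), IsHolderCube m s Γ → μH[s] (S ∩ Γ) = 0 :=
  statement13_general hm s hs k f r hr hsim S hScpt hself hdisj
end
end
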